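/- arXiv:1406.3978 — 2 statements merged into one kernel-verified Lean document; each statement's English description precedes it below -/
import Mathlib

section
/- Let q be a prime power, d a positive integer, and let k be a finite field with q^d elements. Then there exists a group isomorphism e from k^× onto the character group Hom(k^×, ℂ^×) such that e(x^q)(y) = e(x)(y^q) for all x, y ∈ k^×. (Consequently, the natural Galois action of Gal(𝔽_{q^d}/𝔽_q) on the character group of 𝔽_{q^d}^× corresponds, under a suitable isomorphism with 𝔽_{q^d}^×, to the inverse of its natural action on 𝔽_{q^d}^×.) -/
/-- For `k` the finite field with `q^d` elements (`q` a prime power, `d ≥ 1`), there is a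
group isomorphism `e` from `kˣ` to its character group `Hom(kˣ, ℂˣ)` intertwining the
Frobenius `x ↦ x^q` on `kˣ` with its inverse on characters: `e (x ^ q) y = e x (y ^ q)`. -/
theorem exists_char_group_iso_frobenius_inverse (q d : ℕ) (hq : IsPrimePow q)
    (hd : 0 < d) (k : Type) [Field k] [Fintype k] (hk : Fintype.card k = q ^ d) :
    ∃ e : kˣ ≃* (kˣ →* ℂˣ), ∀ x y : kˣ, e (x ^ q) y = e x (y ^ q) := by
  classical
  set n := Nat.card kˣ with hn
  have hn0 : NeZero n := ⟨Nat.card_pos.ne'⟩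
  have hnC : NeZero ((n : ℂ)) := ⟨Nat.cast_ne_zero.mpr hn0.out⟩
  obtain ⟨ζ₀, hζ₀⟩ := HasEnoughRootsOfUnity.exists_primitiveRoot ℂ n
  have hζ : IsPrimitiveRoot ((hζ₀.isUnit hn0.out).unit) n :=
    hζ₀.isUnit_unit hn0.out
  have hζn : ((hζ₀.isUnit hn0.out).unit) ^ n = 1 := hζ.pow_eq_one
  set ψ : AddChar (ZMod n) ℂˣ := AddChar.zmodChar n hζn with hψdef
  have hψ : ψ.IsPrimitive := AddChar.zmodChar_primitive_of_primitive_root n hζ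
  let φ : Multiplicative (ZMod n) ≃* kˣ := zmodCyclicMulEquiv inferInstance
  let E : kˣ →* (kˣ →* ℂˣ) := MonoidHom.mk'
    (fun x => ((AddChar.toMonoidHomEquiv (ψ.mulShift (φ.symm x).toAdd)).comp
      φ.symm.toMonoidHom)) (by
        intro x₁ x₂
        ext y
        simp only [MonoidHom.mul_apply, MonoidHom.comp_apply, MulEquiv.coe_toMonoidHom,
          AddChar.toMonoidHomEquiv_apply, AddChar.mulShift_apply, map_mul, toAdd_mul,
          add_mul, AddChar.map_add_eq_mul, Units.val_mul])
  have hE : ∀ x y : kˣ, E x y = ψ ((φ.symm x).toAdd * (φ.symm y).toAdd) := fun _ _ => rfl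
  have hsymm : ∀ x y : kˣ, E x y = E y x := by
    intro x y
    rw [hE, hE, mul_comm]
  have hinj : Function.Injective E := by
    rw [injective_iff_map_eq_one]
    intro x hx
    have hsh : ψ.mulShift (φ.symm x).toAdd = 1 := by
      ext b
      have h1 := congrArg (fun f : kˣ →* ℂˣ => f (φ (Multiplicative.ofAdd b))) hx
      simp only [MonoidHom.one_apply] at h1
      rw [hE] at h1
      rw [MulEquiv.symm_apply_apply] at h1
      simpa [AddChar.mulShift_apply] using h1
    by_contra hx1
    have : (φ.symm x).toAdd ≠ 0 := by
      intro h0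
      apply hx1
      have : φ.symm x = 1 := by
        rw [← ofAdd_toAdd (φ.symm x), h0]; rfl
      rwa [MulEquiv.map_eq_one_iff] at this
    exact hψ this hsh
  have hexp : NeZero (Monoid.exponent kˣ) := ⟨Monoid.exponent_ne_zero_of_finite⟩
  have hexpC : NeZero ((Monoid.exponent kˣ : ℕ) : ℂ) := ⟨Nat.cast_ne_zero.mpr hexp.out⟩
  obtain ⟨ι⟩ := CommGroup.monoidHom_mulEquiv_of_hasEnoughRootsOfUnity kˣ ℂ
  have hfin : Finite (kˣ →* ℂˣ) := Finite.of_equiv _ ι.symm.toEquiv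
  have hcard : Nat.card kˣ = Nat.card (kˣ →* ℂˣ) := (Nat.card_congr ι.toEquiv).symm
  have hbij : Function.Bijective E := (Nat.bijective_iff_injective_and_card E).mpr ⟨hinj, hcard⟩
  refine ⟨MulEquiv.ofBijective E hbij, fun x y => ?_⟩
  show E (x ^ q) y = E x (y ^ q)
  calc E (x ^ q) y = E y (x ^ q) := by rw [hsymm]
    _ = (E y x) ^ q := map_pow _ _ _
    _ = (E x y) ^ q := by rw [hsymm]
    _ = E x (y ^ q) := (map_pow _ _ _).symm
end

section
/- Let q be a prime power and let k be a finite field with q² elements. If χ : k^× → ℂ^× is a group homomorphism (character) satisfying χ(x^{q+1}) = 1 for all x ∈ k^× (i.e., χ is trivial on the norms of k over its subfield with q elements), then there exists a character ψ : k^× → ℂ^× such that χ(x) = ψ(x^q)·ψ(x)^{−1} for all x ∈ k^×. -/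
/-- Hilbert 90 for characters: if `k` is the field with `q²` elements (`q` a prime power)
and `χ : kˣ →* ℂˣ` is trivial on `(q+1)`-st powers (the norms to the subfield with `q`
elements), then `χ x = ψ (x ^ q) * (ψ x)⁻¹` for some character `ψ`. -/
theorem exists_char_of_norm_trivial (q : ℕ) (hq : IsPrimePow q) (k : Type) [Field k]
    [Fintype k] (hk : Fintype.card k = q ^ 2) (χ : kˣ →* ℂˣ)
    (hχ : ∀ x : kˣ, χ (x ^ (q + 1)) = 1) :
    ∃ ψ : kˣ →* ℂˣ, ∀ x : kˣ, χ x = ψ (x ^ q) * (ψ x)⁻¹ := by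
  have hq2 : 2 ≤ q := hq.two_le
  set n : ℕ := Nat.card kˣ with hn_def
  have hn : n = q ^ 2 - 1 := by
    rw [hn_def, Nat.card_units, Nat.card_eq_fintype_card, hk]
  have hq4 : 4 ≤ q ^ 2 := by nlinarith
  have hq_sq : 1 ≤ q ^ 2 := by omega
  have hmul : (q - 1) * (q + 1) = n := by
    rw [hn]; zify [(by omega : 1 ≤ q), hq_sq]; ring
  haveI : NeZero n := ⟨by omega⟩
  -- the cyclic structure
  set e := zmodCyclicMulEquiv (inferInstance : IsCyclic kˣ) with he
  set g : kˣ := e (Multiplicative.ofAdd 1) with hg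
  set c : ℂˣ := χ g with hc_def
  have hc : c ^ (q + 1) = 1 := by
    have := hχ g
    rwa [map_pow] at this
  -- find a (q-1)-st root of c
  obtain ⟨z0, hz0⟩ := IsAlgClosed.exists_pow_nat_eq (c : ℂ) (n := q - 1) (by omega)
  have hz0ne : z0 ≠ 0 := by
    intro h
    rw [h, zero_pow (by omega : q - 1 ≠ 0)] at hz0
    exact c.ne_zero hz0.symm
  set z : ℂˣ := Units.mk0 z0 hz0ne with hz_def
  have hz : z ^ (q - 1) = c := by
    ext; push_cast [hz_def]; exact hz0
  have hzn : z ^ n = 1 := by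
    rw [← hmul, pow_mul, hz, hc]
  -- build the character on ZMod n
  have hf : (zmultiplesHom (Additive ℂˣ) (Additive.ofMul z)) (n : ℤ) = 0 := by
    simp only [zmultiplesHom_apply]
    rw [← ofMul_zpow, zpow_natCast, hzn, ofMul_one]
  set F : ZMod n →+ Additive ℂˣ := ZMod.lift n ⟨_, hf⟩ with hF
  set ψ' : Multiplicative (ZMod n) →* ℂˣ := AddMonoidHom.toMultiplicativeLeft F with hψ'
  have hψ'1 : ψ' (Multiplicative.ofAdd 1) = z := by
    have h1 : (1 : ZMod n) = ((1 : ℤ) : ZMod n) := by push_cast; rfl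
    simp only [hψ', AddMonoidHom.coe_toMultiplicativeLeft, Function.comp_apply, hF]
    rw [show Multiplicative.toAdd (Multiplicative.ofAdd (1 : ZMod n)) = (1 : ZMod n) from rfl,
      h1, ZMod.lift_coe]
    simp
  refine ⟨ψ'.comp e.symm.toMonoidHom, fun x => ?_⟩
  obtain ⟨a, rfl⟩ := e.surjective x
  set v : ℕ := (Multiplicative.toAdd a).val with hv
  have ha : a = (Multiplicative.ofAdd (1 : ZMod n)) ^ v := by
    rw [← ofAdd_nsmul, nsmul_eq_mul, mul_one, hv, ZMod.natCast_val, ZMod.cast_id]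
    rfl
  have hea : e a = g ^ v := by rw [ha, map_pow]
  have hχa : χ (e a) = c ^ v := by rw [hea, map_pow, hc_def]
  have hψa : ψ' (e.symm (e a)) = z ^ v := by
    rw [MulEquiv.symm_apply_apply, ha, map_pow, hψ'1]
  calc χ (e a) = c ^ v := hχa
    _ = ((z ^ v) ^ q) * ((z ^ v))⁻¹ := by
        rw [← pow_mul, ← hz, ← pow_mul, eq_mul_inv_iff_mul_eq, ← pow_add]
        congr 1
        rw [mul_comm v q, ← Nat.succ_mul]
        congr 1
        omega
    _ = (ψ'.comp e.symm.toMonoidHom) (e a ^ q) * ((ψ'.comp e.symm.toMonoidHom) (e a))⁻¹ := by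
        simp only [MonoidHom.comp_apply, MulEquiv.coe_toMonoidHom, map_pow, hψa]
end
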